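/- Let G be a connected finite simple graph on n ≥ 2 vertices with m edges, maximum degree Δ, minimum degree δ, and diameter D, and let H and H' be connected finite simple graphs on the same vertex set with at least two vertices. Then λ(G, H') ≤ (Δ²/δ²) · (1 + S_G) · λ(G, H), where S_G = (n(n−1)/2 − m) · D². -/

import Mathlib

/-!
Write `q(u, v) = d_H(f u, f v)²` and let `T` and `P` be the sums of `q` over ordered pairs of
adjacent, respectively distinct, vertices of `G`. Then
`R_f = vol · T / Σ_{u ≠ v} q · deg u · deg v` and `δ² P ≤ Σ_{u ≠ v} q · deg u · deg v ≤ Δ² P`.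
Since `T ≤ P`, every `R_f(G, H')` is at most `vol / δ²`. Conversely, for non-adjacent `u ≠ v`,
the triangle inequality along a shortest path of length `k ≤ D` and Cauchy–Schwarz give
`q(u, v) ≤ k T ≤ (D² / 2) T`; summing over the non-edges yields `P ≤ (1 + S_G) T`, hence
`R_f(G, H) ≥ vol / (Δ² (1 + S_G))` for every nonconstant `f`.
-/

open scoped Classical
open Finset

/-- Degree of a vertex in a finite simple graph. -/
noncomputable def gdeg {V : Type*} [Fintype V] (G : SimpleGraph V) (v : V) : ℕ :=
  (G.neighborSet v).ncard

/-- The volume of a finite simple graph: the sum of the degrees of all vertices. -/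
noncomputable def gvol {V : Type*} [Fintype V] (G : SimpleGraph V) : ℕ :=
  ∑ v, gdeg G v

/-- The Rayleigh-type quotient `R_f(G, X)` for an embedding `f : V(G) → X` where `X`
carries a distance function `d`.  The sum over ordered pairs of adjacent vertices divided
by `2` is the sum over edges of `G`; the sum over ordered pairs of distinct vertices divided
by `2` is the sum over unordered pairs of distinct vertices of `G`. -/
noncomputable def Rf {V X : Type*} [Fintype V] (G : SimpleGraph V) (d : X → X → ℝ)
    (f : V → X) : ℝ :=
  ((gvol G : ℝ) * ((∑ u, ∑ v, if G.Adj u v then d (f u) (f v) ^ 2 else 0) / 2)) /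
    ((∑ u, ∑ v, if u ≠ v then d (f u) (f v) ^ 2 * (gdeg G u : ℝ) * (gdeg G v : ℝ) else 0) / 2)

/-- `lam G d` is `λ(G, X)`: the infimum of `R_f(G, X)` over nonconstant `f : V(G) → X`. -/
noncomputable def lam {V X : Type*} [Fintype V] (G : SimpleGraph V) (d : X → X → ℝ) : ℝ :=
  sInf {r | ∃ f : V → X, (∃ u v, f u ≠ f v) ∧ r = Rf G d f}

/-- The diameter of a finite simple graph: the maximum shortest-path distance over pairs. -/
noncomputable def gDiam {V : Type*} [Fintype V] (H : SimpleGraph V) : ℕ :=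
  Finset.univ.sup fun p : V × V => H.dist p.1 p.2

/-- The maximum degree of a finite simple graph. -/
noncomputable def gMaxDeg {V : Type*} [Fintype V] (G : SimpleGraph V) : ℕ :=
  Finset.univ.sup (gdeg G)

/-- The minimum degree of a finite simple graph. -/
noncomputable def gMinDeg {V : Type*} [Fintype V] (G : SimpleGraph V) : ℕ :=
  sInf (Set.range (gdeg G))

open SimpleGraph

section AdjSum

variable {V : Type*} [Fintype V]

noncomputable def adjSum (G : SimpleGraph V) (w : V → V → ℝ) : ℝ :=
  ∑ u, ∑ v, if G.Adj u v then w u v else 0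

lemma adjSum_nonneg (G : SimpleGraph V) {w : V → V → ℝ} (hw : ∀ u v, 0 ≤ w u v) :
    0 ≤ adjSum G w :=
  sum_nonneg fun u _ => sum_nonneg fun v _ => by split_ifs <;> simp [hw]

lemma adjSum_mono (G : SimpleGraph V) {w w' : V → V → ℝ}
    (h : ∀ u v, G.Adj u v → w u v ≤ w' u v) : adjSum G w ≤ adjSum G w' :=
  sum_le_sum fun u _ => sum_le_sum fun v _ => by split_ifs with huv <;> simp [h, huv]

lemma adjSum_mul_left (G : SimpleGraph V) (c : ℝ) (w : V → V → ℝ) :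
    adjSum G (fun u v => c * w u v) = c * adjSum G w := by
  simp only [adjSum, mul_sum, mul_ite, mul_zero]

lemma le_adjSum {G : SimpleGraph V} {w : V → V → ℝ} (hw : ∀ u v, 0 ≤ w u v) {a b : V}
    (hab : G.Adj a b) : w a b ≤ adjSum G w := by
  have hnonneg : ∀ u v, 0 ≤ if G.Adj u v then w u v else 0 := fun u v => by
    split_ifs <;> simp [hw]
  calc w a b = if G.Adj a b then w a b else 0 := (if_pos hab).symm
    _ ≤ ∑ v, if G.Adj a v then w a v else 0 :=
      single_le_sum (fun v _ => hnonneg a v) (mem_univ b)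
    _ ≤ adjSum G w :=
      single_le_sum (f := fun u => ∑ v, if G.Adj u v then w u v else 0)
        (fun u _ => sum_nonneg fun v _ => hnonneg u v) (mem_univ a)

lemma adjSum_top (G : SimpleGraph V) (w : V → V → ℝ) :
    adjSum ⊤ w = adjSum G w + adjSum Gᶜ w := by
  simp only [adjSum, ← sum_add_distrib]
  refine sum_congr rfl fun u _ => sum_congr rfl fun v _ => ?_
  by_cases huv : u = v
  · simp [huv]
  · by_cases h : G.Adj u v <;> simp [huv, h]

lemma adjSum_const (G : SimpleGraph V) (c : ℝ) :
    adjSum G (fun _ _ => c) = 2 * #G.edgeFinset * c := by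
  have hrow : ∀ u, (∑ v, if G.Adj u v then c else 0) = G.degree u * c := fun u => by
    rw [← sum_filter, sum_const, nsmul_eq_mul, ← card_neighborFinset_eq_degree,
      neighborFinset_eq_filter]
  simp only [adjSum, hrow, ← sum_mul]
  rw [← Nat.cast_sum, sum_degrees_eq_twice_card_edges]
  push_cast
  ring

lemma adjSum_top_const (c : ℝ) :
    adjSum (⊤ : SimpleGraph V) (fun _ _ => c) = Fintype.card V * (Fintype.card V - 1) * c := by
  have hrow : ∀ u : V, (∑ v, if (⊤ : SimpleGraph V).Adj u v then c else 0)
      = (Fintype.card V - 1) * c := fun u => by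
    simp only [top_adj]
    rw [← sum_filter, sum_const, nsmul_eq_mul, filter_ne univ u, card_erase_of_mem (mem_univ u),
      card_univ, Nat.cast_pred (Fintype.card_pos_iff.mpr ⟨u⟩)]
  simp only [adjSum, hrow, sum_const, card_univ, nsmul_eq_mul, mul_assoc]

lemma adjSum_compl_const (G : SimpleGraph V) (c : ℝ) :
    adjSum Gᶜ (fun _ _ => c) =
      (Fintype.card V * (Fintype.card V - 1) - 2 * #G.edgeFinset) * c := by
  linarith [adjSum_top G (fun _ _ => c), adjSum_top_const (V := V) c, adjSum_const G c]

end AdjSum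

namespace SimpleGraph

variable {V W : Type*} {G : SimpleGraph V} {H : SimpleGraph W}

lemma Connected.dist_le_sum_darts (hH : H.Connected) (f : V → W) {u v : V} (p : G.Walk u v) :
    H.dist (f u) (f v) ≤ (p.darts.map fun e => H.dist (f e.fst) (f e.snd)).sum := by
  induction p with
  | nil => simp
  | cons _ _ ih =>
    rw [Walk.darts_cons, List.map_cons, List.sum_cons]
    exact hH.dist_triangle.trans (Nat.add_le_add_left ih _)

lemma Walk.sum_darts_toFinset_le_adjSum [Fintype V] {u v : V} (p : G.Walk u v)
    {w : V → V → ℝ} (hw : ∀ a b, 0 ≤ w a b) :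
    ∑ e ∈ p.darts.toFinset, w e.fst e.snd ≤ adjSum G w := by
  have hprod : ∑ e ∈ p.darts.toFinset, w e.fst e.snd
      = ∑ x ∈ p.darts.toFinset.image Dart.toProd, w x.1 x.2 :=
    (sum_image (f := fun x : V × V => w x.1 x.2) fun _ _ _ _ h => Dart.toProd_injective h).symm
  have hadj : adjSum G w = ∑ x ∈ univ.filter (fun x : V × V => G.Adj x.1 x.2), w x.1 x.2 := by
    rw [sum_filter, ← univ_product_univ, sum_product]; rfl
  rw [hprod, hadj]
  refine sum_le_sum_of_subset_of_nonneg ?_ fun x _ _ => hw x.1 x.2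
  intro x hx
  obtain ⟨e, -, rfl⟩ := mem_image.mp hx
  simp [e.adj]

lemma Walk.IsPath.sq_dist_le_length_mul_sum_darts (hH : H.Connected) (f : V → W) {u v : V}
    {p : G.Walk u v} (hp : p.IsPath) :
    (H.dist (f u) (f v) : ℝ) ^ 2 ≤
      p.length * ∑ e ∈ p.darts.toFinset, (H.dist (f e.fst) (f e.snd) : ℝ) ^ 2 := by
  have hnodup : p.darts.Nodup := hp.isTrail.edges_nodup.of_map _
  have hcard : #p.darts.toFinset = p.length := by
    rw [List.toFinset_card_of_nodup hnodup, Walk.length_darts]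
  have hchain :
      (H.dist (f u) (f v) : ℝ) ≤ ∑ e ∈ p.darts.toFinset, (H.dist (f e.fst) (f e.snd) : ℝ) := by
    calc (H.dist (f u) (f v) : ℝ)
        ≤ ((p.darts.map fun e => H.dist (f e.fst) (f e.snd)).sum : ℕ) := by
          exact_mod_cast hH.dist_le_sum_darts f p
      _ = _ := by rw [Nat.cast_list_sum, List.map_map, List.sum_toFinset _ hnodup]; rfl
  calc (H.dist (f u) (f v) : ℝ) ^ 2
      ≤ (∑ e ∈ p.darts.toFinset, (H.dist (f e.fst) (f e.snd) : ℝ)) ^ 2 := by gcongr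
    _ ≤ p.length * ∑ e ∈ p.darts.toFinset, (H.dist (f e.fst) (f e.snd) : ℝ) ^ 2 := by
      rw [← hcard]; exact sq_sum_le_card_mul_sum_sq

lemma Preconnected.exists_adj_apply_ne (hG : G.Preconnected) {f : V → W} {u v : V}
    (huv : f u ≠ f v) : ∃ a b, G.Adj a b ∧ f a ≠ f b := by
  obtain ⟨p⟩ := hG u v
  obtain ⟨e, -, he, he'⟩ := p.exists_boundary_dart {x | f x = f u} rfl huv.symm
  exact ⟨e.fst, e.snd, e.adj, fun h => he' (h.symm.trans he)⟩

end SimpleGraph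

section Degrees

variable {V : Type*} [Fintype V]

lemma gdeg_eq_degree (G : SimpleGraph V) (v : V) : gdeg G v = G.degree v := by
  rw [gdeg, ← card_neighborFinset_eq_degree, neighborFinset_def, Set.ncard_eq_toFinset_card']

lemma gdeg_le_gMaxDeg (G : SimpleGraph V) (v : V) : gdeg G v ≤ gMaxDeg G :=
  le_sup (f := gdeg G) (mem_univ v)

lemma gMinDeg_le_gdeg (G : SimpleGraph V) (v : V) : gMinDeg G ≤ gdeg G v :=
  Nat.sInf_le ⟨v, rfl⟩

lemma gMinDeg_le_gMaxDeg [Nonempty V] (G : SimpleGraph V) : gMinDeg G ≤ gMaxDeg G :=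
  (gMinDeg_le_gdeg G (Classical.arbitrary V)).trans (gdeg_le_gMaxDeg G _)

lemma SimpleGraph.Preconnected.gMinDeg_pos [Nontrivial V] {G : SimpleGraph V}
    (hG : G.Preconnected) : 0 < gMinDeg G := by
  obtain ⟨v, hv⟩ := Nat.sInf_mem (Set.range_nonempty (gdeg G))
  rw [gMinDeg, ← hv, gdeg_eq_degree]
  exact hG.degree_pos_of_nontrivial v

lemma dist_le_gDiam (G : SimpleGraph V) (u v : V) : G.dist u v ≤ gDiam G :=
  le_sup (f := fun p : V × V => G.dist p.1 p.2) (mem_univ (u, v))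

lemma edgeSet_ncard_eq (G : SimpleGraph V) : G.edgeSet.ncard = #G.edgeFinset := by
  rw [Set.ncard_eq_toFinset_card']; rfl

end Degrees

noncomputable def sqDist {V X : Type*} (d : X → X → ℝ) (f : V → X) (u v : V) : ℝ :=
  d (f u) (f v) ^ 2

lemma sqDist_nonneg {V X : Type*} (d : X → X → ℝ) (f : V → X) (u v : V) :
    0 ≤ sqDist d f u v :=
  sq_nonneg _

section Rayleigh

variable {V X : Type*} [Fintype V]

noncomputable def degWeighted (G : SimpleGraph V) (w : V → V → ℝ) (u v : V) : ℝ :=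
  w u v * gdeg G u * gdeg G v

lemma degWeighted_nonneg (G : SimpleGraph V) {w : V → V → ℝ} (hw : ∀ u v, 0 ≤ w u v)
    (u v : V) : 0 ≤ degWeighted G w u v :=
  mul_nonneg (mul_nonneg (hw u v) (Nat.cast_nonneg _)) (Nat.cast_nonneg _)

/-- `S_G` of the paper: the number of non-edges of `G` times `D²`. -/
noncomputable def nonEdgeFactor (G : SimpleGraph V) : ℝ :=
  ((Fintype.card V : ℝ) * ((Fintype.card V : ℝ) - 1) / 2 - (G.edgeSet.ncard : ℝ)) *
    (gDiam G : ℝ) ^ 2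

lemma nonEdgeFactor_nonneg (G : SimpleGraph V) : 0 ≤ nonEdgeFactor G := by
  have h : (#G.edgeFinset : ℝ) ≤ (Fintype.card V).choose 2 := by
    exact_mod_cast G.card_edgeFinset_le_card_choose_two
  rw [Nat.cast_choose_two] at h
  rw [nonEdgeFactor, edgeSet_ncard_eq]
  exact mul_nonneg (by linarith) (by positivity)

lemma Rf_eq (G : SimpleGraph V) (d : X → X → ℝ) (f : V → X) :
    Rf G d f = gvol G * adjSum G (sqDist d f) /
      adjSum ⊤ (degWeighted G (sqDist d f)) := by
  simp only [Rf, adjSum, sqDist, degWeighted, top_adj]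
  rw [mul_div_assoc', div_div_div_cancel_right₀ two_ne_zero]

lemma Rf_nonneg (G : SimpleGraph V) (d : X → X → ℝ) (f : V → X) : 0 ≤ Rf G d f := by
  rw [Rf_eq]
  exact div_nonneg (mul_nonneg (by positivity) (adjSum_nonneg _ (sqDist_nonneg d f)))
    (adjSum_nonneg _ (degWeighted_nonneg G (sqDist_nonneg d f)))

lemma adjSum_degWeighted_le (G G' : SimpleGraph V) {w : V → V → ℝ}
    (hw : ∀ u v, 0 ≤ w u v) :
    adjSum G' (degWeighted G w) ≤ gMaxDeg G ^ 2 * adjSum G' w := by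
  rw [← adjSum_mul_left]
  refine adjSum_mono _ fun u v _ => ?_
  rw [degWeighted]
  have hu : (gdeg G u : ℝ) ≤ gMaxDeg G := by exact_mod_cast gdeg_le_gMaxDeg G u
  have hv : (gdeg G v : ℝ) ≤ gMaxDeg G := by exact_mod_cast gdeg_le_gMaxDeg G v
  calc w u v * gdeg G u * gdeg G v = w u v * (gdeg G u * gdeg G v) := by ring
    _ ≤ w u v * (gMaxDeg G * gMaxDeg G) := by gcongr; exact hw u v
    _ = _ := by ring

lemma sq_gMinDeg_mul_adjSum_le (G G' : SimpleGraph V) {w : V → V → ℝ}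
    (hw : ∀ u v, 0 ≤ w u v) :
    gMinDeg G ^ 2 * adjSum G' w ≤ adjSum G' (degWeighted G w) := by
  rw [← adjSum_mul_left]
  refine adjSum_mono _ fun u v _ => ?_
  rw [degWeighted]
  have hu : (gMinDeg G : ℝ) ≤ gdeg G u := by exact_mod_cast gMinDeg_le_gdeg G u
  have hv : (gMinDeg G : ℝ) ≤ gdeg G v := by exact_mod_cast gMinDeg_le_gdeg G v
  calc (gMinDeg G : ℝ) ^ 2 * w u v = w u v * (gMinDeg G * gMinDeg G) := by ring
    _ ≤ w u v * (gdeg G u * gdeg G v) := by gcongr; exact hw u v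
    _ = _ := by ring

lemma Rf_le_gvol_div_sq_gMinDeg (G : SimpleGraph V) (hδ : 0 < gMinDeg G) (d : X → X → ℝ)
    (f : V → X) : Rf G d f ≤ gvol G / gMinDeg G ^ 2 := by
  have hq := sqDist_nonneg d f
  have hT : adjSum G (sqDist d f) ≤ adjSum ⊤ (sqDist d f) := by
    linarith [adjSum_top G (sqDist d f), adjSum_nonneg Gᶜ hq]
  have hDen : (gMinDeg G : ℝ) ^ 2 * adjSum G (sqDist d f) ≤
      adjSum ⊤ (degWeighted G (sqDist d f)) :=
    (mul_le_mul_of_nonneg_left hT (by positivity)).trans (sq_gMinDeg_mul_adjSum_le G ⊤ hq)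
  rw [Rf_eq]
  rcases (adjSum_nonneg ⊤ (degWeighted_nonneg G hq)).eq_or_lt with h0 | hpos
  · rw [← h0, div_zero]
    positivity
  · rw [div_le_div_iff₀ hpos (by positivity)]
    have := mul_le_mul_of_nonneg_left hDen (Nat.cast_nonneg (gvol G) : (0 : ℝ) ≤ gvol G)
    linarith

lemma lam_le_gvol_div_sq_gMinDeg (G : SimpleGraph V) (hδ : 0 < gMinDeg G) (d : X → X → ℝ) :
    lam G d ≤ gvol G / gMinDeg G ^ 2 := by
  rw [lam]
  set R := {r | ∃ f : V → X, (∃ u v, f u ≠ f v) ∧ r = Rf G d f}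
  have hR : BddBelow R := ⟨0, by rintro _ ⟨f, -, rfl⟩; exact Rf_nonneg G d f⟩
  rcases R.eq_empty_or_nonempty with h | ⟨_, f, hf, rfl⟩
  · rw [h, Real.sInf_empty]
    positivity
  · exact (csInf_le hR ⟨f, hf, rfl⟩).trans (Rf_le_gvol_div_sq_gMinDeg G hδ d f)

end Rayleigh

section LowerBound

variable {V W : Type*} [Fintype V] {G : SimpleGraph V} {H : SimpleGraph W}

lemma sqDist_le_dist_mul_adjSum (hG : G.Connected) (hH : H.Connected) (f : V → W) (u v : V) :
    sqDist (fun i j => (H.dist i j : ℝ)) f u v ≤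
      G.dist u v * adjSum G (sqDist (fun i j => (H.dist i j : ℝ)) f) := by
  obtain ⟨p, hp, hlen⟩ := hG.exists_path_of_dist u v
  calc sqDist (fun i j => (H.dist i j : ℝ)) f u v
      ≤ p.length * ∑ e ∈ p.darts.toFinset, (H.dist (f e.fst) (f e.snd) : ℝ) ^ 2 :=
        hp.sq_dist_le_length_mul_sum_darts hH f
    _ ≤ G.dist u v * adjSum G (sqDist (fun i j => (H.dist i j : ℝ)) f) := by
        rw [hlen]
        gcongr
        exact p.sum_darts_toFinset_le_adjSum (sqDist_nonneg (fun i j => (H.dist i j : ℝ)) f)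

/-- A non-adjacent pair is at `G`-distance `k ≥ 2`, and `k ≤ k² / 2 ≤ D² / 2`. -/
lemma adjSum_compl_sqDist_le (hG : G.Connected) (hH : H.Connected) (f : V → W) :
    adjSum Gᶜ (sqDist (fun i j => (H.dist i j : ℝ)) f) ≤
      nonEdgeFactor G * adjSum G (sqDist (fun i j => (H.dist i j : ℝ)) f) := by
  set T := adjSum G (sqDist (fun i j => (H.dist i j : ℝ)) f)
  have hT : 0 ≤ T := adjSum_nonneg G (sqDist_nonneg _ f)
  have hpair : ∀ u v, Gᶜ.Adj u v →
      sqDist (fun i j => (H.dist i j : ℝ)) f u v ≤ (gDiam G : ℝ) ^ 2 / 2 * T := by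
    intro u v huv
    rw [compl_adj] at huv
    have h2 : 2 ≤ G.dist u v := by
      have h0 := hG.pos_dist_of_ne huv.1
      have h1 : G.dist u v ≠ 1 := fun h => huv.2 (dist_eq_one_iff_adj.mp h)
      omega
    have hD : (G.dist u v : ℝ) ≤ gDiam G := by exact_mod_cast dist_le_gDiam G u v
    have h2' : (2 : ℝ) ≤ G.dist u v := by exact_mod_cast h2
    refine (sqDist_le_dist_mul_adjSum hG hH f u v).trans (mul_le_mul_of_nonneg_right ?_ hT)
    nlinarith
  calc adjSum Gᶜ (sqDist (fun i j => (H.dist i j : ℝ)) f)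
      ≤ adjSum Gᶜ (fun _ _ => (gDiam G : ℝ) ^ 2 / 2 * T) := adjSum_mono _ hpair
    _ = nonEdgeFactor G * T := by
        rw [adjSum_compl_const, nonEdgeFactor, edgeSet_ncard_eq]
        ring

lemma gvol_div_le_Rf [Nontrivial V] (hG : G.Connected) (hH : H.Connected) {f : V → W}
    (hf : ∃ u v, f u ≠ f v) :
    gvol G / (gMaxDeg G ^ 2 * (1 + nonEdgeFactor G)) ≤
      Rf G (fun i j => (H.dist i j : ℝ)) f := by
  set q := sqDist (fun i j => (H.dist i j : ℝ)) f
  have hq : ∀ u v, 0 ≤ q u v := sqDist_nonneg _ f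
  have hT : 0 < adjSum G q := by
    obtain ⟨u, v, huv⟩ := hf
    obtain ⟨a, b, hab, hfab⟩ := hG.preconnected.exists_adj_apply_ne huv
    have hpos : 0 < q a b := by
      have : 0 < H.dist (f a) (f b) := hH.pos_dist_of_ne hfab
      simp only [q, sqDist]
      positivity
    exact hpos.trans_le (le_adjSum hq hab)
  have hδ : (0 : ℝ) < gMinDeg G := by exact_mod_cast hG.preconnected.gMinDeg_pos
  have hΔ : (0 : ℝ) < gMaxDeg G := hδ.trans_le (by exact_mod_cast gMinDeg_le_gMaxDeg G)
  have hC : 0 < (gMaxDeg G : ℝ) ^ 2 * (1 + nonEdgeFactor G) := by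
    have := nonEdgeFactor_nonneg G
    positivity
  have hTtop : adjSum G q ≤ adjSum ⊤ q := by
    linarith [adjSum_top G q, adjSum_nonneg Gᶜ hq]
  have hDen_pos : 0 < adjSum ⊤ (degWeighted G q) :=
    lt_of_lt_of_le (by positivity)
      ((mul_le_mul_of_nonneg_left hTtop (by positivity)).trans (sq_gMinDeg_mul_adjSum_le G ⊤ hq))
  have hDen_le : adjSum ⊤ (degWeighted G q) ≤
      (gMaxDeg G ^ 2 * (1 + nonEdgeFactor G)) * adjSum G q := by
    calc adjSum ⊤ (degWeighted G q) ≤ gMaxDeg G ^ 2 * adjSum ⊤ q :=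
          adjSum_degWeighted_le G ⊤ hq
      _ ≤ gMaxDeg G ^ 2 * ((1 + nonEdgeFactor G) * adjSum G q) := by
          gcongr
          linarith [adjSum_top G q, adjSum_compl_sqDist_le hG hH f]
      _ = _ := by ring
  rw [Rf_eq, div_le_div_iff₀ hC hDen_pos]
  have := mul_le_mul_of_nonneg_left hDen_le (Nat.cast_nonneg (α := ℝ) (gvol G))
  linarith

lemma gvol_div_le_lam [Nontrivial V] [Nontrivial W] (hG : G.Connected) (hH : H.Connected) :
    gvol G / (gMaxDeg G ^ 2 * (1 + nonEdgeFactor G)) ≤ lam G (fun i j => (H.dist i j : ℝ)) := by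
  obtain ⟨v₀, v₁, hv⟩ := exists_pair_ne V
  obtain ⟨w₀, w₁, hw⟩ := exists_pair_ne W
  set f₀ : V → W := Function.update (fun _ => w₁) v₀ w₀
  have hf₀ : f₀ v₀ ≠ f₀ v₁ := by simpa [f₀, Function.update_of_ne hv.symm] using hw
  refine le_csInf ⟨_, f₀, ⟨v₀, v₁, hf₀⟩, rfl⟩ ?_
  rintro _ ⟨f, hf, rfl⟩
  exact gvol_div_le_Rf hG hH hf

end LowerBound

theorem stmt_9_general {V W : Type*} [Fintype V] [Fintype W]
    (G : SimpleGraph V) (H H' : SimpleGraph W)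
    (hG : G.Connected) (hH : H.Connected)
    (hn : 2 ≤ Fintype.card V) (hk : 2 ≤ Fintype.card W) :
    lam G (fun i j => (H'.dist i j : ℝ)) ≤
      (gMaxDeg G : ℝ) ^ 2 / (gMinDeg G : ℝ) ^ 2 *
        (1 + ((Fintype.card V : ℝ) * ((Fintype.card V : ℝ) - 1) / 2 - (G.edgeSet.ncard : ℝ))
            * (gDiam G : ℝ) ^ 2) *
        lam G (fun i j => (H.dist i j : ℝ)) := by
  have : Nontrivial V := Fintype.one_lt_card_iff_nontrivial.mp hn
  have : Nontrivial W := Fintype.one_lt_card_iff_nontrivial.mp hk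
  have hδ := hG.preconnected.gMinDeg_pos
  have hΔ : (0 : ℝ) < gMaxDeg G := by exact_mod_cast hδ.trans_le (gMinDeg_le_gMaxDeg G)
  have hS : 0 < 1 + nonEdgeFactor G := by linarith [nonEdgeFactor_nonneg G]
  change _ ≤ _ * (1 + nonEdgeFactor G) * _
  calc lam G (fun i j => (H'.dist i j : ℝ)) ≤ gvol G / gMinDeg G ^ 2 :=
        lam_le_gvol_div_sq_gMinDeg G hδ _
    _ = (gMaxDeg G : ℝ) ^ 2 / (gMinDeg G : ℝ) ^ 2 * (1 + nonEdgeFactor G) *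
          (gvol G / (gMaxDeg G ^ 2 * (1 + nonEdgeFactor G))) := by
        field_simp
    _ ≤ _ := by
        gcongr
        exact gvol_div_le_lam hG hH

/-- For a connected finite simple graph `G` on `n ≥ 2` vertices with `m` edges,
maximum degree `Δ`, minimum degree `δ` and diameter `D`, and connected graphs `H`, `H'` on
the same vertex set with at least two vertices,
`λ(G, H') ≤ (Δ²/δ²)(1 + S_G) λ(G, H)` where `S_G = (n(n-1)/2 - m) D²`. -/
theorem stmt_9 {V W : Type*} [Fintype V] [Fintype W]
    (G : SimpleGraph V) (H H' : SimpleGraph W)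
    (hG : G.Connected) (hH : H.Connected) (hH' : H'.Connected)
    (hn : 2 ≤ Fintype.card V) (hk : 2 ≤ Fintype.card W) :
    lam G (fun i j => (H'.dist i j : ℝ)) ≤
      (gMaxDeg G : ℝ) ^ 2 / (gMinDeg G : ℝ) ^ 2 *
        (1 + ((Fintype.card V : ℝ) * ((Fintype.card V : ℝ) - 1) / 2 - (G.edgeSet.ncard : ℝ))
            * (gDiam G : ℝ) ^ 2) *
        lam G (fun i j => (H.dist i j : ℝ)) :=
  stmt_9_general G H H' hG hH hn hk
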